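/- arXiv:math/0703457 — 3 statements merged into one kernel-verified Lean document; each statement's English description precedes it below -/
import Mathlib

section
/- Let k be an algebraically closed field and A a 1-Calabi-Yau k-linear abelian category. Then the endo-simple objects of A form a directed family: there is no cycle of nonzero non-isomorphisms among them. Precisely, for every n ≥ 1 there do not exist endo-simple objects S_0, S_1, …, S_{n-1} of A together with morphisms f_i : S_i → S_{i+1 (mod n)} for 0 ≤ i ≤ n−1 such that every f_i is nonzero and no f_i is an isomorphism. -/
open CategoryTheory Limits

attribute [local instance] CategoryTheory.Abelian.hasFiniteBiproducts

universe w v u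

section Preliminaries

variable {k : Type*} [Field k] {A : Type u} [Category.{v} A] [Abelian A]
  [CategoryTheory.Linear k A] [HasExt.{w} A]

lemma Ext_mk₀_add {X Y : A} (f g : X ⟶ Y) :
    Abelian.Ext.mk₀ (f + g) = Abelian.Ext.mk₀ f + Abelian.Ext.mk₀ g := by
  letI := HasDerivedCategory.standard A
  apply Abelian.Ext.homAddEquiv.injective
  rw [map_add]
  simp only [Abelian.Ext.homAddEquiv_apply, Abelian.Ext.mk₀_hom]
  dsimp [ShiftedHom.mk₀]
  rw [Functor.map_add, Preadditive.add_comp]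

/-- The `k`-vector space structure on the Ext-groups of a `k`-linear abelian category,
where a scalar `c : k` acts on an extension class by composition with `c • 𝟙 _`. -/
noncomputable instance extModule {X Y : A} {n : ℕ} : Module k (Abelian.Ext X Y n) where
  smul c α := α.comp (Abelian.Ext.mk₀ (c • 𝟙 Y)) (add_zero n)
  one_smul α := by
    show α.comp (Abelian.Ext.mk₀ ((1 : k) • 𝟙 Y)) (add_zero n) = α
    rw [one_smul]; exact α.comp_mk₀_id
  mul_smul c c' α := by
    show α.comp (Abelian.Ext.mk₀ ((c * c') • 𝟙 Y)) (add_zero n)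
      = (α.comp (Abelian.Ext.mk₀ (c' • 𝟙 Y)) (add_zero n)).comp
          (Abelian.Ext.mk₀ (c • 𝟙 Y)) (add_zero n)
    rw [Abelian.Ext.comp_assoc_of_third_deg_zero, Abelian.Ext.mk₀_comp_mk₀]
    congr 2
    rw [Linear.smul_comp, Linear.comp_smul, Category.id_comp, smul_smul, mul_comm]
  smul_zero c := by
    show (0 : Abelian.Ext X Y n).comp _ _ = 0
    simp
  smul_add c α β := by
    show (α + β).comp _ _ = α.comp _ _ + β.comp _ _
    simp
  add_smul c c' α := by
    show α.comp (Abelian.Ext.mk₀ ((c + c') • 𝟙 Y)) (add_zero n)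
      = α.comp (Abelian.Ext.mk₀ (c • 𝟙 Y)) (add_zero n)
        + α.comp (Abelian.Ext.mk₀ (c' • 𝟙 Y)) (add_zero n)
    rw [add_smul, Ext_mk₀_add, Abelian.Ext.comp_add]
  zero_smul α := by
    show α.comp (Abelian.Ext.mk₀ ((0 : k) • 𝟙 Y)) (add_zero n) = 0
    rw [zero_smul, Abelian.Ext.mk₀_zero, Abelian.Ext.comp_zero]

variable (k) in
/-- An object `S` is *endo-simple* if the canonical map `k → End S`, `c ↦ c • 𝟙 S`,
is an isomorphism (equivalently, a bijection). -/
def EndoSimple (S : A) : Prop :=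
  Function.Bijective (fun c : k => c • 𝟙 S)

variable (k A) in
/-- A `k`-linear abelian category `A` is *1-Calabi-Yau* if all Hom- and `Ext¹`-spaces are
finite-dimensional over `k`, all `Extⁱ` for `i ≥ 2` vanish (`A` is hereditary), and there
are `k`-linear isomorphisms `Hom(X,Y) ≅ Ext¹(Y,X)*`, natural in `X` and `Y` (naturality being
expressed by compatibility with pre- and post-composition). -/
def IsOneCalabiYau : Prop :=
  (∀ X Y : A, FiniteDimensional k (X ⟶ Y)) ∧
  (∀ X Y : A, FiniteDimensional k (Abelian.Ext X Y 1)) ∧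
  (∀ (X Y : A) (i : ℕ), 2 ≤ i → Subsingleton (Abelian.Ext X Y i)) ∧
  ∃ φ : ∀ X Y : A, (X ⟶ Y) ≃ₗ[k] Module.Dual k (Abelian.Ext Y X 1),
    (∀ ⦃X X' Y : A⦄ (f : X' ⟶ X) (u : X ⟶ Y) (e : Abelian.Ext Y X' 1),
        φ X' Y (f ≫ u) e = φ X Y u (e.comp (Abelian.Ext.mk₀ f) (add_zero 1))) ∧
    (∀ ⦃X Y Y' : A⦄ (u : X ⟶ Y) (g : Y ⟶ Y') (e : Abelian.Ext Y' X 1),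
        φ X Y' (u ≫ g) e = φ X Y u ((Abelian.Ext.mk₀ g).comp e (zero_add 1)))

/-- An object `X` of an abelian category is *indecomposable* if it is nonzero and in any
decomposition `X ≅ Y ⊞ Z` one of the two summands is zero. -/
def Indecomp (X : A) : Prop :=
  ¬ IsZero X ∧ ∀ Y Z : A, (X ≅ Y ⊞ Z) → (IsZero Y ∨ IsZero Z)

end Preliminaries


/-!
Write `X ⇝ Y` when there is a nonzero non-isomorphism `X ⟶ Y` between endo-simple objects.
A loop `X ⇝ X` is impossible since `End X = k`. Serre duality gives the shortcut property:
`P ⇝ Z ⇝ T ⇝ U` implies `P ⇝ T` or `Z ⇝ U`, which shortens every cycle to a loop.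

For the shortcut, suppose every `Z ⟶ T` is killed by `T ⟶ U` and by `P ⟶ Z`, and let
`J ⊆ T` be the trace of `Z` in `T`. Then `J ≠ 0`, `J ≠ T`, and `Hom(J, Z) = 0`, so
`Ext¹(Z, J) = 0`. If `Hom(J, T/J) = 0` then `Ext¹(T/J, J) = 0`, `J` is a direct summand of the
endo-simple `T`, hence `J = T`; so some `Z ⟶ J ⟶ T/J` is nonzero. It lifts to a map `Z ⟶ T`
because `Ext¹(Z, J) = 0`, but every map `Z ⟶ T` lands in `J`.
-/
namespace Relation

variable {α : Type*} {r : α → α → Prop}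

theorem TransGen.rel_or_exists_rel_rel_of_shortcut
    (shortcut : ∀ ⦃p z t u⦄, r p z → r z t → r t u → r p t ∨ r z u) {a b : α}
    (h : TransGen r a b) : r a b ∨ ∃ c, r a c ∧ r c b := by
  induction h with
  | single hab => exact .inl hab
  | tail _ hbc ih =>
    rcases ih with hab | ⟨d, had, hdb⟩
    · exact .inr ⟨_, hab, hbc⟩
    · rcases shortcut had hdb hbc with hab | hdc
      · exact .inr ⟨_, hab, hbc⟩
      · exact .inr ⟨d, had, hdc⟩

theorem not_transGen_self_of_shortcut (irrefl : ∀ a, ¬ r a a)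
    (shortcut : ∀ ⦃p z t u⦄, r p z → r z t → r t u → r p t ∨ r z u) (a : α) :
    ¬ TransGen r a a := by
  intro h
  rcases h.rel_or_exists_rel_rel_of_shortcut shortcut with haa | ⟨c, hac, hca⟩
  · exact irrefl a haa
  · rcases shortcut hca hac hca with hcc | haa
    · exact irrefl c hcc
    · exact irrefl a haa

theorem transGen_of_cycle {n : ℕ} (hn : 1 ≤ n) (x : Fin n → α)
    (h : ∀ i : Fin n, r (x i) (x ⟨(i.val + 1) % n, Nat.mod_lt _ hn⟩)) :
    TransGen r (x ⟨0, hn⟩) (x ⟨0, hn⟩) := by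
  have path : ∀ j (hj : j < n), TransGen r (x ⟨0, hn⟩) (x ⟨(j + 1) % n, Nat.mod_lt _ hn⟩) := by
    intro j
    induction j with
    | zero => exact fun _ => .single (h _)
    | succ j ih =>
      intro hj
      have hx : x ⟨(j + 1) % n, Nat.mod_lt _ hn⟩ = x ⟨j + 1, hj⟩ :=
        congrArg x (Fin.ext (Nat.mod_eq_of_lt hj))
      exact .tail (hx ▸ ih (by omega)) (h _)
  have hx : x ⟨(n - 1 + 1) % n, Nat.mod_lt _ hn⟩ = x ⟨0, hn⟩ :=
    congrArg x (Fin.ext (by simp [Nat.sub_add_cancel hn]))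
  exact hx ▸ path (n - 1) (by omega)

end Relation

namespace CategoryTheory.ShortComplex.ShortExact

open Abelian

variable {C : Type u} [Category.{v} C] [Abelian C] [HasExt.{w} C] {S : ShortComplex C}

theorem exists_comp_g_eq_of_subsingleton_ext (hS : S.ShortExact) {X : C}
    [Subsingleton (Ext X S.X₁ 1)] (ψ : X ⟶ S.X₃) : ∃ w : X ⟶ S.X₂, w ≫ S.g = ψ := by
  obtain ⟨x, hx⟩ := Ext.covariant_sequence_exact₃ X hS (Ext.mk₀ ψ) (zero_add 1)
    (Subsingleton.elim _ _)
  obtain ⟨w, rfl⟩ := (Ext.mk₀_bijective X S.X₂).2 x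
  exact ⟨w, (Ext.mk₀_bijective X S.X₃).1 (by rwa [Ext.mk₀_comp_mk₀] at hx)⟩

theorem exists_f_comp_eq_of_subsingleton_ext (hS : S.ShortExact) {Y : C}
    [Subsingleton (Ext S.X₃ Y 1)] (χ : S.X₁ ⟶ Y) : ∃ r : S.X₂ ⟶ Y, S.f ≫ r = χ := by
  obtain ⟨x, hx⟩ := Ext.contravariant_sequence_exact₁ hS Y (Ext.mk₀ χ) (add_zero 1)
    (Subsingleton.elim _ _)
  obtain ⟨r, rfl⟩ := (Ext.mk₀_bijective S.X₂ Y).2 x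
  exact ⟨r, (Ext.mk₀_bijective S.X₁ Y).1 (by rwa [Ext.mk₀_comp_mk₀] at hx)⟩

end CategoryTheory.ShortComplex.ShortExact

section EndoSimple

variable {k : Type*} [Field k] {A : Type u} [Category.{v} A] [Abelian A]
  [CategoryTheory.Linear k A] {S T : A}

theorem EndoSimple.exists_eq_smul_id (hS : EndoSimple k S) (e : S ⟶ S) :
    ∃ c : k, e = c • 𝟙 S :=
  (hS.2 e).imp fun _ hc => hc.symm

theorem EndoSimple.isIso_of_ne_zero (hS : EndoSimple k S) {e : S ⟶ S} (he : e ≠ 0) :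
    IsIso e := by
  obtain ⟨c, rfl⟩ := hS.exists_eq_smul_id e
  have hc : c ≠ 0 := by rintro rfl; exact he (zero_smul k _)
  exact ⟨c⁻¹ • 𝟙 S, by simp [smul_smul, hc], by simp [smul_smul, hc]⟩

theorem EndoSimple.not_isZero (hS : EndoSimple k S) : ¬ IsZero S := fun h =>
  one_ne_zero (hS.1 (by simp [h.eq_of_src (𝟙 S) 0]) : (1 : k) = 0)

theorem EndoSimple.comp_eq_id_of_comp_eq_id (hT : EndoSimple k T) (hS : ¬ IsZero S)
    {u : S ⟶ T} {r : T ⟶ S} (h : u ≫ r = 𝟙 S) : r ≫ u = 𝟙 T := by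
  have idem : (r ≫ u) ≫ (r ≫ u) = (r ≫ u) ≫ 𝟙 T := by simp [reassoc_of% h]
  have hru : r ≫ u ≠ 0 := fun h0 => hS <| (IsZero.iff_id_eq_zero S).2 <|
    calc 𝟙 S = (u ≫ r) ≫ (u ≫ r) := by rw [h, Category.id_comp]
      _ = u ≫ (r ≫ u) ≫ r := by simp only [Category.assoc]
      _ = 0 := by rw [h0, zero_comp, comp_zero]
  have := hT.isIso_of_ne_zero hru
  exact (cancel_epi _).1 idem

variable (k) in
def NonzeroNonIso (X Y : A) : Prop :=
  EndoSimple k X ∧ EndoSimple k Y ∧ ∃ f : X ⟶ Y, f ≠ 0 ∧ ¬ IsIso f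

theorem NonzeroNonIso.irrefl (X : A) : ¬ NonzeroNonIso k X X :=
  fun ⟨hX, _, _, hf, hfi⟩ => hfi (hX.isIso_of_ne_zero hf)

end EndoSimple

section CalabiYau

variable {k : Type*} [Field k] {A : Type u} [Category.{v} A] [Abelian A]
  [CategoryTheory.Linear k A]

variable (k) in
theorem exists_trace (Z T : A) [FiniteDimensional k (Z ⟶ T)] :
    ∃ (J : A) (ι : J ⟶ T), Mono ι ∧ (∀ u : Z ⟶ T, ∃ u' : Z ⟶ J, u' ≫ ι = u) ∧
      ∀ ⦃W : A⦄ (χ : J ⟶ W), (∀ v : Z ⟶ J, v ≫ χ = 0) → χ = 0 := by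
  let b := Module.finBasis k (Z ⟶ T)
  let Φ : (⨁ fun _ : Fin (Module.finrank k (Z ⟶ T)) => Z) ⟶ T := biproduct.desc fun j => b j
  refine ⟨image Φ, image.ι Φ, inferInstance,
    fun u => ⟨biproduct.lift (fun j => b.repr u j • 𝟙 Z) ≫ factorThruImage Φ, ?_⟩,
    fun W χ hχ => ?_⟩
  · rw [Category.assoc, image.fac, biproduct.lift_desc]
    simp [b.sum_repr u]
  · rw [← cancel_epi (factorThruImage Φ), comp_zero]
    refine biproduct.hom_ext' _ _ fun j => ?_
    simpa using hχ (biproduct.ι (fun _ => Z) j ≫ factorThruImage Φ)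

variable [HasExt.{w} A]

theorem IsOneCalabiYau.subsingleton_ext_one (hCY : IsOneCalabiYau k A) {X Y : A}
    (h : ∀ χ : X ⟶ Y, χ = 0) : Subsingleton (Abelian.Ext Y X 1) := by
  obtain ⟨-, -, -, φ, -⟩ := hCY
  have : Subsingleton (X ⟶ Y) := ⟨fun a b => (h a).trans (h b).symm⟩
  exact (Module.subsingleton_dual_iff k).1 (φ X Y).symm.toEquiv.subsingleton

theorem IsOneCalabiYau.exists_comp_ne_zero (hCY : IsOneCalabiYau k A) {P Z T U : A}
    (hZ : EndoSimple k Z) (hT : EndoSimple k T) {f : Z ⟶ T} (hf : f ≠ 0)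
    {g : T ⟶ U} (hg : g ≠ 0) {p : P ⟶ Z} (hp : p ≠ 0) :
    (∃ u : Z ⟶ T, u ≫ g ≠ 0) ∨ ∃ u : Z ⟶ T, p ≫ u ≠ 0 := by
  by_contra! ⟨hug, hpu⟩
  have := hCY.1 Z T
  obtain ⟨J, ι, hι, hfac, hgen⟩ := exists_trace k Z T
  have hιg : ι ≫ g = 0 := hgen _ fun v => by rw [← Category.assoc]; exact hug _
  have hJ : ¬ IsZero J := fun hJ => hf <| by
    obtain ⟨f', rfl⟩ := hfac f
    rw [hJ.eq_of_tgt f' 0, zero_comp]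
  have hJZ : ∀ χ : J ⟶ Z, χ = 0 := fun χ => hgen χ fun v => by
    by_contra hvχ
    have := hZ.isIso_of_ne_zero hvχ
    have hpv : p ≫ v = 0 := by rw [← cancel_mono ι, Category.assoc, zero_comp]; exact hpu _
    exact hp ((cancel_mono (v ≫ χ)).1 (by simp [reassoc_of% hpv]))
  let E := ShortComplex.mk ι (cokernel.π ι) (cokernel.condition ι)
  have hE : E.ShortExact := { exact := E.exact_of_g_is_cokernel (cokernelIsCokernel ι) }
  obtain ⟨θ, hθ⟩ : ∃ θ : J ⟶ cokernel ι, θ ≠ 0 := by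
    by_contra! hθ
    have := hCY.subsingleton_ext_one hθ
    obtain ⟨r, hr⟩ := hE.exists_f_comp_eq_of_subsingleton_ext (𝟙 J)
    have hrι := hT.comp_eq_id_of_comp_eq_id hJ hr
    exact hg (by rw [← Category.id_comp g, ← hrι, Category.assoc, hιg, comp_zero])
  obtain ⟨v, hv⟩ : ∃ v : Z ⟶ J, v ≫ θ ≠ 0 := by
    by_contra! h
    exact hθ (hgen θ h)
  have := hCY.subsingleton_ext_one hJZ
  obtain ⟨w, hw⟩ := hE.exists_comp_g_eq_of_subsingleton_ext (v ≫ θ)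
  obtain ⟨w', rfl⟩ := hfac w
  exact hv (by rw [← hw]; simp [E])

theorem IsOneCalabiYau.nonzeroNonIso_shortcut (hCY : IsOneCalabiYau k A) ⦃P Z T U : A⦄ :
    NonzeroNonIso k P Z → NonzeroNonIso k Z T → NonzeroNonIso k T U →
      NonzeroNonIso k P T ∨ NonzeroNonIso k Z U := by
  rintro ⟨hP, hZ, p, hp, hpi⟩ ⟨-, hT, f, hf, -⟩ ⟨-, hU, g, hg, hgi⟩
  rcases hCY.exists_comp_ne_zero hZ hT hf hg hp with ⟨u, hu⟩ | ⟨u, hu⟩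
  · refine .inr ⟨hZ, hU, u ≫ g, hu, fun _ => hgi ?_⟩
    have hsplit : (inv (u ≫ g) ≫ u) ≫ g = 𝟙 U := by simp
    exact ⟨inv (u ≫ g) ≫ u, hT.comp_eq_id_of_comp_eq_id hU.not_isZero hsplit, hsplit⟩
  · refine .inl ⟨hP, hT, p ≫ u, hu, fun _ => hpi ?_⟩
    have hsplit : p ≫ u ≫ inv (p ≫ u) = 𝟙 P := by rw [← Category.assoc, IsIso.hom_inv_id]
    exact ⟨u ≫ inv (p ≫ u), hsplit, hZ.comp_eq_id_of_comp_eq_id hP.not_isZero hsplit⟩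

end CalabiYau

/-- In a 1-Calabi-Yau category the endo-simple objects form a directed family:
there is no cycle `S_0 → S_1 → ⋯ → S_{n-1} → S_0` of nonzero non-isomorphisms between
endo-simple objects. -/
theorem no_cycle_of_endoSimples
    {k : Type*} [Field k] {A : Type u} [Category.{v} A] [Abelian A]
    [CategoryTheory.Linear k A] [HasExt.{w} A]
    (hCY : IsOneCalabiYau k A) :
    ∀ (n : ℕ) (hn : 1 ≤ n) (S : Fin n → A)
      (f : ∀ i : Fin n, S i ⟶ S ⟨(i.val + 1) % n, Nat.mod_lt _ (by omega)⟩),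
      (∀ i, EndoSimple k (S i)) → (∀ i, f i ≠ 0) → (∀ i, ¬ IsIso (f i)) → False := by
  intro n hn S f hS hf hfi
  exact Relation.not_transGen_self_of_shortcut NonzeroNonIso.irrefl hCY.nonzeroNonIso_shortcut _
    (Relation.transGen_of_cycle hn S fun i => ⟨hS i, hS _, f i, hf i, hfi i⟩)
end

section
/- Let k be an algebraically closed field, A a 1-Calabi-Yau k-linear abelian category, B an endo-simple object of A, and d ≥ 1. Let (E_i)_{i ∈ ℤ} be a family of endo-simple objects of A that are pairwise non-isomorphic and with E_i not isomorphic to B for all i, such that dim_k Hom_A(E_i, B) = d for every i, and such that for every i ∈ ℤ there is a short exact sequence 0 → E_{i-1} → E_i → B^{⊕d} → 0. Then: (1) Hom_A(E_i, E_j) = 0 and Ext^1_A(E_j, E_i) = 0 whenever i > j; and (2) Hom_A(B, E_i) = 0 and Ext^1_A(E_i, B) = 0 for all i ∈ ℤ. -/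
open CategoryTheory Limits

attribute [local instance] CategoryTheory.Abelian.hasFiniteBiproducts

universe w v u

/-- Let `B` be endo-simple, `d ≥ 1`, and `(E_i)_{i ∈ ℤ}` a family of pairwise
non-isomorphic endo-simple objects, none isomorphic to `B`, with `dim Hom(E_i, B) = d` and
short exact sequences `0 → E_{i-1} → E_i → B^{⊕d} → 0`.  Then `Hom(E_i,E_j) = 0` and
`Ext¹(E_j,E_i) = 0` for `i > j`, and `Hom(B,E_i) = 0` and `Ext¹(E_i,B) = 0` for all `i`. -/
theorem hom_and_ext_vanishing_for_ample_family
    {k : Type*} [Field k] [IsAlgClosed k] {A : Type u} [Category.{v} A] [Abelian A]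
    [CategoryTheory.Linear k A] [HasExt.{w} A]
    (hCY : IsOneCalabiYau k A)
    (B : A) (hB : EndoSimple k B) (d : ℕ) (hd : 1 ≤ d)
    (E : ℤ → A) (hE : ∀ i, EndoSimple k (E i))
    (hpair : ∀ i j : ℤ, i ≠ j → IsEmpty (E i ≅ E j))
    (hEB : ∀ i : ℤ, IsEmpty (E i ≅ B))
    (hdim : ∀ i : ℤ, Module.finrank k (E i ⟶ B) = d)
    (hses : ∀ i : ℤ, ∃ (f : E (i - 1) ⟶ E i) (g : E i ⟶ ⨁ fun _ : Fin d => B)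
      (w : f ≫ g = 0), (ShortComplex.mk f g w).ShortExact) :
    (∀ i j : ℤ, j < i →
      (∀ u : E i ⟶ E j, u = 0) ∧ Subsingleton (Abelian.Ext (E j) (E i) 1)) ∧
    (∀ i : ℤ, (∀ u : B ⟶ E i, u = 0) ∧ Subsingleton (Abelian.Ext (E i) B 1)) := by
  obtain ⟨hfd, hfd1, hvan, φ, hφ1, hφ2⟩ := hCY
  -- the key vanishing of Hom(E i, E j) for j < i, by induction on the gap
  have key : ∀ n : ℕ, ∀ i j : ℤ, i = j + 1 + n → ∀ u : E i ⟶ E j, u = 0 := by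
    intro n
    induction n with
    | zero =>
      intro i j h u
      obtain ⟨f, g, w, hse⟩ := hses i
      haveI : Mono f := hse.mono_f
      have hj : j = i - 1 := by omega
      let f' : E j ⟶ E i := eqToHom (congrArg E hj) ≫ f
      haveI : Mono f' := mono_comp _ _
      obtain ⟨c, hc⟩ := (hE i).2 (u ≫ f')
      have hc' : c • 𝟙 (E i) = u ≫ f' := hc
      by_cases hc0 : c = 0
      · have h0 : u ≫ f' = 0 ≫ f' := by
          rw [← hc', hc0, zero_smul, Limits.zero_comp]
        exact (cancel_mono f').mp h0
      · exfalso
        have hsec : (c⁻¹ • u) ≫ f' = 𝟙 (E i) := by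
          rw [Linear.smul_comp, ← hc', smul_smul, inv_mul_cancel₀ hc0, one_smul]
        haveI : IsSplitEpi f' := IsSplitEpi.mk' ⟨c⁻¹ • u, hsec⟩
        haveI : Epi f' := IsSplitEpi.epi f'
        haveI : IsIso f' := isIso_of_mono_of_epi f'
        exact (hpair j i (by omega)).false (asIso f')
    | succ n ih =>
      intro i j h u
      obtain ⟨f, g, w, hse⟩ := hses (j + 1)
      haveI : Mono f := hse.mono_f
      let f' : E j ⟶ E (j + 1) := eqToHom (congrArg E (show j = j + 1 - 1 by omega)) ≫ f
      haveI : Mono f' := mono_comp _ _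
      have h0 : u ≫ f' = 0 ≫ f' := by
        rw [Limits.zero_comp, ih i (j + 1) (by omega) (u ≫ f')]
      exact (cancel_mono f').mp h0
  have hom1 : ∀ i j : ℤ, j < i → ∀ u : E i ⟶ E j, u = 0 := by
    intro i j hji u
    exact key (i - j - 1).toNat i j (by omega) u
  -- vanishing of Hom(B, E i)
  have hom2 : ∀ i : ℤ, ∀ v : B ⟶ E i, v = 0 := by
    intro i v
    obtain ⟨f, g, w, hse⟩ := hses (i + 1)
    haveI : Epi g := hse.epi_g
    set π : (⨁ fun _ : Fin d => B) ⟶ B := biproduct.π (fun _ : Fin d => B) ⟨0, hd⟩ with hπ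
    set ι : B ⟶ (⨁ fun _ : Fin d => B) := biproduct.ι (fun _ : Fin d => B) ⟨0, hd⟩ with hι
    have h1 : g ≫ (π ≫ v) = 0 := hom1 (i + 1) i (by omega) _
    have h2 : π ≫ v = 0 := by
      have := h1.trans (comp_zero (f := g)).symm
      exact (cancel_epi g).mp this
    calc v = (ι ≫ π) ≫ v := by
            rw [hπ, hι, biproduct.ι_π_self]; simp
      _ = ι ≫ (π ≫ v) := by rw [Category.assoc]
      _ = 0 := by rw [h2, comp_zero]
  -- a finite-dimensional space with subsingleton dual is subsingleton
  have dualsub : ∀ (V : Type w) [AddCommGroup V] [Module k V] [FiniteDimensional k V],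
      Subsingleton (Module.Dual k V) → Subsingleton V := by
    intro V _ _ _ h
    refine (Module.evalEquiv k V).toEquiv.subsingleton_congr.mpr ?_
    constructor; intro a b; ext x; rw [Subsingleton.elim x 0]; simp
  refine ⟨fun i j hji => ⟨hom1 i j hji, ?_⟩, fun i => ⟨hom2 i, ?_⟩⟩
  · haveI := hfd1 (E j) (E i)
    refine dualsub _ ?_
    refine (φ (E i) (E j)).toEquiv.symm.subsingleton_congr.mpr ?_
    constructor; intro a b
    rw [hom1 i j hji a, hom1 i j hji b]
  · haveI := hfd1 (E i) B
    refine dualsub _ ?_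
    refine (φ B (E i)).toEquiv.symm.subsingleton_congr.mpr ?_
    constructor; intro a b
    rw [hom2 i a, hom2 i b]
end

section
/- Let k be an algebraically closed field, A a 1-Calabi-Yau k-linear abelian category, B an endo-simple object of A, and d ≥ 1. Let (E_i)_{i ∈ ℤ} be a family of endo-simple objects of A that are pairwise non-isomorphic and with E_i not isomorphic to B for all i, such that dim_k Hom_A(E_i, B) = d for every i, and such that for every i ∈ ℤ there is a short exact sequence 0 → E_{i-1} → E_i → B^{⊕d} → 0. Then for all integers i < j one has dim_k Hom_A(E_i, E_j) = (j − i)·d². -/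
open CategoryTheory Limits

attribute [local instance] CategoryTheory.Abelian.hasFiniteBiproducts

universe w v u

section AuxiliaryLemmas

open Abelian

variable {k : Type*} [Field k] {A : Type u} [Category.{v} A] [Abelian A]
  [CategoryTheory.Linear k A] [HasExt.{w} A]

/-- Evaluation formula: the Calabi-Yau pairing of `u` with `e` is the "trace"
of the Yoneda composition `(mk₀ u).comp e`. -/
lemma CY_phi_eval
    (φ : ∀ X Y : A, (X ⟶ Y) ≃ₗ[k] Module.Dual k (Abelian.Ext Y X 1))
    (hφ₂ : ∀ ⦃X Y Y' : A⦄ (u : X ⟶ Y) (g : Y ⟶ Y') (e : Abelian.Ext Y' X 1),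
        φ X Y' (u ≫ g) e = φ X Y u ((Abelian.Ext.mk₀ g).comp e (zero_add 1)))
    {X Y : A} (u : X ⟶ Y) (e : Abelian.Ext Y X 1) :
    φ X Y u e = φ X X (𝟙 X) ((Abelian.Ext.mk₀ u).comp e (zero_add 1)) := by
  have h := hφ₂ (𝟙 X) u e
  rwa [Category.id_comp] at h

/-- Separation: an `Ext¹`-class annihilated by all pairings with `Hom` is zero. -/
lemma CY_ext_zero_of_forall
    (φ : ∀ X Y : A, (X ⟶ Y) ≃ₗ[k] Module.Dual k (Abelian.Ext Y X 1))
    {X Y : A} (z : Abelian.Ext Y X 1)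
    (h : ∀ u : X ⟶ Y, φ X Y u z = 0) : z = 0 := by
  refine (Module.forall_dual_apply_eq_zero_iff k z).mp fun ψ => ?_
  have h2 := h ((φ X Y).symm ψ)
  rwa [LinearEquiv.apply_symm_apply] at h2

/-- **Lifting lemma.** If the obstruction class `(mk₀ u).comp ξ_S` vanishes, then
`u : X ⟶ S.X₃` factors through `S.g`. -/
lemma CY_exists_lift
    (φ : ∀ X Y : A, (X ⟶ Y) ≃ₗ[k] Module.Dual k (Abelian.Ext Y X 1))
    (hφ₂ : ∀ ⦃X Y Y' : A⦄ (u : X ⟶ Y) (g : Y ⟶ Y') (e : Abelian.Ext Y' X 1),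
        φ X Y' (u ≫ g) e = φ X Y u ((Abelian.Ext.mk₀ g).comp e (zero_add 1)))
    (hfd : ∀ X Y : A, FiniteDimensional k (X ⟶ Y))
    (hfd1 : ∀ X Y : A, FiniteDimensional k (Abelian.Ext X Y 1))
    {S : ShortComplex A} (hS : S.ShortExact) {X : A} (u : X ⟶ S.X₃)
    (hu : (Abelian.Ext.mk₀ u).comp hS.extClass (zero_add 1) = 0) :
    ∃ v : X ⟶ S.X₂, v ≫ S.g = u := by
  haveI := hfd X S.X₃
  haveI := hfd1 S.X₃ X
  set W : Submodule k (X ⟶ S.X₃) := LinearMap.range (Linear.rightComp k X S.g) with hWdef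
  suffices hmem : u ∈ W by
    obtain ⟨v, hv⟩ := hmem
    exact ⟨v, by simpa using hv⟩
  by_contra hmem
  have hq : W.mkQ u ≠ 0 := by
    rw [Submodule.mkQ_apply]
    simpa [Submodule.Quotient.mk_eq_zero] using hmem
  obtain ⟨ℓ, hℓ⟩ : ∃ ℓ : Module.Dual k ((X ⟶ S.X₃) ⧸ W), ℓ (W.mkQ u) ≠ 0 := by
    by_contra hco
    push_neg at hco
    exact hq ((Module.forall_dual_apply_eq_zero_iff k _).mp hco)
  have hψW : ∀ v : X ⟶ S.X₂, ℓ (W.mkQ (v ≫ S.g)) = 0 := by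
    intro v
    have hv : (v ≫ S.g) ∈ W := ⟨v, by simp⟩
    rw [Submodule.mkQ_apply, (Submodule.Quotient.mk_eq_zero W).mpr hv, map_zero]
  obtain ⟨e, he⟩ : ∃ e : Abelian.Ext S.X₃ X 1,
      ∀ w' : X ⟶ S.X₃, φ X S.X₃ w' e = ℓ (W.mkQ w') := by
    refine ⟨(Module.evalEquiv k (Abelian.Ext S.X₃ X 1)).symm
      ((ℓ.comp W.mkQ).comp
        ((φ X S.X₃).symm : Module.Dual k (Abelian.Ext S.X₃ X 1) →ₗ[k] (X ⟶ S.X₃))),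
      fun w' => ?_⟩
    rw [Module.apply_evalEquiv_symm_apply]
    simp
  have hz : (Abelian.Ext.mk₀ S.g).comp e (zero_add 1) = 0 := by
    refine CY_ext_zero_of_forall φ _ fun v => ?_
    rw [← hφ₂ v S.g e, he]
    exact hψW v
  obtain ⟨x, hx⟩ := Abelian.Ext.contravariant_sequence_exact₃ hS X e hz (add_zero 1)
  refine hℓ ?_
  rw [← he u, CY_phi_eval φ hφ₂ u e, ← hx,
    ← Abelian.Ext.comp_assoc_of_third_deg_zero (Abelian.Ext.mk₀ u) hS.extClass x (zero_add 1),
    hu, Abelian.Ext.zero_comp]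
  exact map_zero _

/-- Left exactness of `Hom(X, -)` with the last term given by the range of
composition with `S.g`. -/
lemma finrank_hom_of_shortExact
    (hfd : ∀ X Y : A, FiniteDimensional k (X ⟶ Y))
    {S : ShortComplex A} (hS : S.ShortExact) (X : A) :
    Module.finrank k (X ⟶ S.X₂) = Module.finrank k (X ⟶ S.X₁)
      + Module.finrank k (LinearMap.range (Linear.rightComp k X S.g)) := by
  haveI := hfd X S.X₁
  haveI := hfd X S.X₂
  haveI := hfd X S.X₃
  haveI := hS.mono_f
  have hinj : Function.Injective (Linear.rightComp k X S.f) := by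
    intro a b hab
    have hab' : a ≫ S.f = b ≫ S.f := by simpa using hab
    exact (cancel_mono S.f).mp hab'
  have hrange : LinearMap.range (Linear.rightComp k X S.f)
      = LinearMap.ker (Linear.rightComp k X S.g) := by
    apply le_antisymm
    · rintro _ ⟨v, rfl⟩
      simp only [LinearMap.mem_ker, Linear.rightComp_apply, Category.assoc, S.zero, comp_zero]
    · intro v hv
      have hv' : v ≫ S.g = 0 := by simpa using hv
      exact ⟨hS.exact.lift v hv', by simpa using hS.exact.lift_f v hv'⟩
  have hrn := LinearMap.finrank_range_add_finrank_ker (Linear.rightComp k X S.g)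
  rw [← hrange, LinearMap.finrank_range_of_inj hinj] at hrn
  omega

/-- Dimension of `Hom` into a finite biproduct of copies of `B`. -/
lemma finrank_hom_biproduct
    (hfd : ∀ X Y : A, FiniteDimensional k (X ⟶ Y)) (X B : A) (d : ℕ) :
    Module.finrank k (X ⟶ ⨁ fun _ : Fin d => B) = d * Module.finrank k (X ⟶ B) := by
  haveI := hfd X B
  let e : (X ⟶ ⨁ fun _ : Fin d => B) ≃ₗ[k] (Fin d → (X ⟶ B)) :=
    { toFun := fun u m => u ≫ biproduct.π _ m
      map_add' := fun u v => by funext m; simp [Preadditive.add_comp]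
      map_smul' := fun c u => by funext m; simp [Linear.smul_comp]
      invFun := fun v => biproduct.lift v
      left_inv := fun u => by apply biproduct.hom_ext; intro m; simp
      right_inv := fun v => by funext m; simp }
  rw [e.finrank_eq, Module.finrank_pi_fintype, Finset.sum_const, Finset.card_univ,
    Fintype.card_fin, smul_eq_mul]

/-- The endomorphism ring of an endo-simple object is one-dimensional. -/
lemma finrank_end_of_endoSimple {X : A} (hX : EndoSimple k X) :
    Module.finrank k (X ⟶ X) = 1 := by
  have hfun : ⇑(LinearMap.toSpanSingleton k (X ⟶ X) (𝟙 X)) = fun c : k => c • 𝟙 X := by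
    funext c
    simp [LinearMap.toSpanSingleton_apply]
  have e := LinearEquiv.ofBijective (LinearMap.toSpanSingleton k (X ⟶ X) (𝟙 X))
    (by rw [hfun]; exact hX)
  rw [← e.finrank_eq, Module.finrank_self]

/-- CY symmetry for dimensions: `dim Ext¹(Y, X) = dim Hom(X, Y)`. -/
lemma CY_finrank_ext_one
    (φ : ∀ X Y : A, (X ⟶ Y) ≃ₗ[k] Module.Dual k (Abelian.Ext Y X 1))
    (hfd : ∀ X Y : A, FiniteDimensional k (X ⟶ Y)) (X Y : A) :
    Module.finrank k (Abelian.Ext Y X 1) = Module.finrank k (X ⟶ Y) := by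
  haveI := hfd X Y
  have h := (φ X Y).finrank_eq
  rw [Subspace.dual_finrank_eq] at h
  exact h.symm

/-- `Ext¹(X, Y)` vanishes whenever `Hom(Y, X)` does. -/
lemma CY_ext_one_subsingleton
    (φ : ∀ X Y : A, (X ⟶ Y) ≃ₗ[k] Module.Dual k (Abelian.Ext Y X 1))
    (hfd : ∀ X Y : A, FiniteDimensional k (X ⟶ Y))
    (hfd1 : ∀ X Y : A, FiniteDimensional k (Abelian.Ext X Y 1))
    {X Y : A} (hzero : ∀ h : Y ⟶ X, h = 0) :
    Subsingleton (Abelian.Ext X Y 1) := by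
  haveI := hfd Y X
  haveI := hfd1 X Y
  have h1 : Module.finrank k (Abelian.Ext X Y 1) = 0 := by
    rw [CY_finrank_ext_one φ hfd Y X]
    haveI : Subsingleton (Y ⟶ X) := ⟨fun a b => by rw [hzero a, hzero b]⟩
    exact Module.finrank_zero_of_subsingleton
  exact Module.finrank_zero_iff.mp h1

end AuxiliaryLemmas


/-- Let `B` be endo-simple, `d ≥ 1`, and `(E_i)_{i ∈ ℤ}` a family of pairwise
non-isomorphic endo-simple objects, none isomorphic to `B`, with `dim Hom(E_i, B) = d` and
short exact sequences `0 → E_{i-1} → E_i → B^{⊕d} → 0`.  Then for `i < j` we have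
`dim Hom(E_i, E_j) = (j - i)·d²`. -/
theorem finrank_hom_ample_family
    {k : Type*} [Field k] [IsAlgClosed k] {A : Type u} [Category.{v} A] [Abelian A]
    [CategoryTheory.Linear k A] [HasExt.{w} A]
    (hCY : IsOneCalabiYau k A)
    (B : A) (hB : EndoSimple k B) (d : ℕ) (hd : 1 ≤ d)
    (E : ℤ → A) (hE : ∀ i, EndoSimple k (E i))
    (hpair : ∀ i j : ℤ, i ≠ j → IsEmpty (E i ≅ E j))
    (hEB : ∀ i : ℤ, IsEmpty (E i ≅ B))
    (hdim : ∀ i : ℤ, Module.finrank k (E i ⟶ B) = d)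
    (hses : ∀ i : ℤ, ∃ (f : E (i - 1) ⟶ E i) (g : E i ⟶ ⨁ fun _ : Fin d => B)
      (w : f ≫ g = 0), (ShortComplex.mk f g w).ShortExact) :
    ∀ i j : ℤ, i < j →
      (Module.finrank k (E i ⟶ E j) : ℤ) = (j - i) * (d : ℤ) ^ 2 := by
  obtain ⟨hfd, hfd1, -, φ, -, hφ₂⟩ := hCY
  -- normalized short exact sequences, giving monomorphisms `E i ⟶ E (i+1)`
  have hses1 : ∀ i : ℤ, ∃ f : E i ⟶ E (i + 1), Mono f := by
    intro i
    have h := hses (i + 1)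
    rw [show i + 1 - 1 = i from by ring] at h
    obtain ⟨f, g, w, hSE⟩ := h
    exact ⟨f, hSE.mono_f⟩
  -- chains of monomorphisms
  have hmono : ∀ i j : ℤ, i + 1 ≤ j → ∃ ι : E i ⟶ E j, Mono ι := by
    intro i
    refine Int.le_induction ?_ ?_
    · exact hses1 i
    · rintro n - ⟨ι, hι⟩
      obtain ⟨f, hf⟩ := hses1 n
      haveI := hι
      haveI := hf
      exact ⟨ι ≫ f, mono_comp ι f⟩
  -- no nonzero morphisms downwards
  have hdown : ∀ i j : ℤ, i < j → ∀ h : E j ⟶ E i, h = 0 := by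
    intro i j hij h
    obtain ⟨ι, hι⟩ := hmono i j (by omega)
    haveI := hι
    have hbij : Function.Bijective (fun c : k => c • 𝟙 (E j)) := hE j
    obtain ⟨c, hc⟩ := hbij.2 (h ≫ ι)
    have hc' : c • 𝟙 (E j) = h ≫ ι := hc
    by_cases hc0 : c = 0
    · refine (cancel_mono ι).mp ?_
      rw [zero_comp, ← hc', hc0, zero_smul]
    · exfalso
      have hτι : (c⁻¹ • h) ≫ ι = 𝟙 (E j) := by
        rw [Linear.smul_comp, ← hc', smul_smul, inv_mul_cancel₀ hc0, one_smul]
      have hιτ : ι ≫ (c⁻¹ • h) = 𝟙 (E i) := by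
        refine (cancel_mono ι).mp ?_
        rw [Category.assoc, hτι, Category.comp_id, Category.id_comp]
      exact (hpair i j (by omega)).false (Iso.mk ι (c⁻¹ • h) hιτ hτι)
  -- base case: `dim Hom(E_{j-1}, E_j) = d²`
  have keyBase : ∀ j : ℤ, Module.finrank k (E (j - 1) ⟶ E j) = d * d := by
    intro j
    obtain ⟨f, g, w, hSE⟩ := hses j
    haveI := hfd (E (j - 1)) (E (j - 1))
    haveI := hfd1 (E (j - 1)) (E (j - 1))
    haveI := hfd (E (j - 1)) (⨁ fun _ : Fin d => B)
    have hend1 : Module.finrank k (E (j - 1) ⟶ E (j - 1)) = 1 :=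
      finrank_end_of_endoSimple (hE (j - 1))
    have hext1 : Module.finrank k (Abelian.Ext (E (j - 1)) (E (j - 1)) 1) = 1 := by
      rw [CY_finrank_ext_one φ hfd (E (j - 1)) (E (j - 1)), hend1]
    have hone : (𝟙 (E (j - 1))) ≠ 0 := by
      intro h0
      haveI : Subsingleton (E (j - 1) ⟶ E (j - 1)) := ⟨fun a b => by
        rw [← Category.comp_id a, ← Category.comp_id b, h0, comp_zero, comp_zero]⟩
      rw [Module.finrank_zero_of_subsingleton] at hend1
      omega
    -- injectivity of the trace functional on the one-dimensional `Ext¹(X, X)`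
    have ht : ∀ z : Abelian.Ext (E (j - 1)) (E (j - 1)) 1,
        φ (E (j - 1)) (E (j - 1)) (𝟙 (E (j - 1))) z = 0 → z = 0 := by
      intro z hz
      by_contra hzne
      have hsp : Submodule.span k ({z} : Set (Abelian.Ext (E (j - 1)) (E (j - 1)) 1)) = ⊤ :=
        (finrank_eq_one_iff_of_nonzero z hzne).mp hext1
      have hker : φ (E (j - 1)) (E (j - 1)) (𝟙 (E (j - 1))) = 0 := by
        apply LinearMap.ext
        intro y
        have hy : y ∈ Submodule.span k ({z} : Set (Abelian.Ext (E (j - 1)) (E (j - 1)) 1)) := by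
          rw [hsp]; trivial
        obtain ⟨c, rfl⟩ := Submodule.mem_span_singleton.mp hy
        rw [map_smul, hz, smul_zero, LinearMap.zero_apply]
      exact hone ((φ (E (j - 1)) (E (j - 1))).injective
        (hker.trans (map_zero (φ (E (j - 1)) (E (j - 1)))).symm))
    -- the extension class is nonzero
    have hxi : hSE.extClass ≠ 0 := by
      intro h0
      obtain ⟨v, hv⟩ := CY_exists_lift φ hφ₂ hfd hfd1 hSE
        (𝟙 ((ShortComplex.mk f g w).X₃)) (by rw [Abelian.Ext.mk₀_id_comp, h0])
      have hv' : v ≫ g = 𝟙 (⨁ fun _ : Fin d => B) := hv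
      set i0 : Fin d := ⟨0, hd⟩ with hi0
      set a : B ⟶ E j := biproduct.ι (fun _ : Fin d => B) i0 ≫ v with hadef
      set b : E j ⟶ B := g ≫ biproduct.π (fun _ : Fin d => B) i0 with hbdef
      have hab : a ≫ b = 𝟙 B := by
        rw [hadef, hbdef]
        calc (biproduct.ι (fun _ : Fin d => B) i0 ≫ v) ≫
              (g ≫ biproduct.π (fun _ : Fin d => B) i0)
            = biproduct.ι (fun _ : Fin d => B) i0 ≫
              (v ≫ g) ≫ biproduct.π (fun _ : Fin d => B) i0 := by
              simp only [Category.assoc]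
          _ = 𝟙 B := by rw [hv', Category.id_comp, biproduct.ι_π_self]
      have hbijj : Function.Bijective (fun c : k => c • 𝟙 (E j)) := hE j
      obtain ⟨μ, hμ⟩ := hbijj.2 (b ≫ a)
      have hμ' : μ • 𝟙 (E j) = b ≫ a := hμ
      have h2 : (b ≫ a) ≫ (b ≫ a) = b ≫ a := by
        calc (b ≫ a) ≫ (b ≫ a) = b ≫ (a ≫ b) ≫ a := by simp only [Category.assoc]
          _ = b ≫ a := by rw [hab, Category.id_comp]
      have hμμ : μ * μ = μ := by
        apply hbijj.1
        show (μ * μ) • 𝟙 (E j) = μ • 𝟙 (E j)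
        calc (μ * μ) • 𝟙 (E j) = (μ • 𝟙 (E j)) ≫ (μ • 𝟙 (E j)) := by
              rw [Linear.smul_comp, Linear.comp_smul, smul_smul, Category.comp_id]
          _ = (b ≫ a) ≫ (b ≫ a) := by rw [hμ']
          _ = b ≫ a := h2
          _ = μ • 𝟙 (E j) := hμ'.symm
      have hfac : μ * (μ - 1) = 0 := by rw [mul_sub, mul_one, hμμ, sub_self]
      rcases mul_eq_zero.mp hfac with h0' | h1'
      · have hba : b ≫ a = 0 := by rw [← hμ', h0', zero_smul]
        have hIB : 𝟙 B = 0 := by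
          calc 𝟙 B = (a ≫ b) ≫ (a ≫ b) := by rw [hab, Category.id_comp]
            _ = a ≫ (b ≫ a) ≫ b := by simp only [Category.assoc]
            _ = 0 := by rw [hba, zero_comp, comp_zero]
        haveI := hfd (E j) B
        haveI : Subsingleton (E j ⟶ B) := ⟨fun p q => by
          rw [← Category.comp_id p, ← Category.comp_id q, hIB, comp_zero, comp_zero]⟩
        have hzero : Module.finrank k (E j ⟶ B) = 0 := Module.finrank_zero_of_subsingleton
        rw [hdim j] at hzero
        omega
      · have hba1 : b ≫ a = 𝟙 (E j) := by rw [← hμ', sub_eq_zero.mp h1', one_smul]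
        exact (hEB j).false (Iso.mk b a hba1 hab)
    -- the linear functional `u ↦ ⟨u, ξ⟩`
    set lam : (E (j - 1) ⟶ (⨁ fun _ : Fin d => B)) →ₗ[k] k :=
      { toFun := fun u => φ (E (j - 1)) (⨁ fun _ : Fin d => B) u hSE.extClass
        map_add' := fun a b => by simp only [map_add, LinearMap.add_apply]
        map_smul' := fun c a => by
          simp only [map_smul, LinearMap.smul_apply, RingHom.id_apply] } with hlamdef
    have hlamne : lam ≠ 0 := by
      intro h0
      apply hxi
      apply CY_ext_zero_of_forall φ
      intro u
      have := LinearMap.congr_fun h0 u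
      simpa [hlamdef] using this
    have hlamrange : Module.finrank k (LinearMap.range lam) = 1 := by
      have hsurj : Function.Surjective lam := by
        obtain ⟨u₀, hu₀⟩ : ∃ u₀, lam u₀ ≠ 0 := by
          by_contra hno
          push_neg at hno
          exact hlamne (LinearMap.ext fun u => hno u)
        intro c
        refine ⟨(c * (lam u₀)⁻¹) • u₀, ?_⟩
        rw [map_smul, smul_eq_mul, mul_assoc, inv_mul_cancel₀ hu₀, mul_one]
      rw [LinearMap.range_eq_top.mpr hsurj, finrank_top, Module.finrank_self]
    -- the range of composition with `g` is the kernel of `lam`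
    have hrange : LinearMap.range (Linear.rightComp k (E (j - 1)) g)
        = LinearMap.ker lam := by
      apply le_antisymm
      · rintro _ ⟨v, rfl⟩
        simp only [LinearMap.mem_ker, Linear.rightComp_apply]
        show φ (E (j - 1)) (⨁ fun _ : Fin d => B) (v ≫ g) hSE.extClass = 0
        rw [hφ₂ v g hSE.extClass]
        have hcomp : (Abelian.Ext.mk₀ g).comp hSE.extClass (zero_add 1) = 0 :=
          hSE.comp_extClass
        rw [hcomp, map_zero]
      · intro u hu
        have hu' : φ (E (j - 1)) (⨁ fun _ : Fin d => B) u hSE.extClass = 0 := hu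
        have hobs : (Abelian.Ext.mk₀ u).comp hSE.extClass (zero_add 1) = 0 := by
          apply ht
          rw [← CY_phi_eval φ hφ₂ u hSE.extClass]
          exact hu'
        obtain ⟨v, hv⟩ := CY_exists_lift φ hφ₂ hfd hfd1 hSE u hobs
        exact ⟨v, hv⟩
    have hcount : Module.finrank k (E (j - 1) ⟶ E j)
        = Module.finrank k (E (j - 1) ⟶ E (j - 1))
          + Module.finrank k (LinearMap.range
              (Linear.rightComp k (E (j - 1)) g)) :=
      finrank_hom_of_shortExact hfd hSE (E (j - 1))
    rw [hrange, hend1] at hcount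
    have hbp : Module.finrank k (E (j - 1) ⟶ (⨁ fun _ : Fin d => B))
        = d * d := by
      rw [finrank_hom_biproduct hfd, hdim (j - 1)]
    have hrn : Module.finrank k (LinearMap.range lam)
        + Module.finrank k (LinearMap.ker lam)
        = Module.finrank k (E (j - 1) ⟶ (⨁ fun _ : Fin d => B)) :=
      LinearMap.finrank_range_add_finrank_ker lam
    rw [hlamrange, hbp] at hrn
    rw [hcount]
    omega
  -- inductive step: `dim Hom(E_i, E_j) = dim Hom(E_i, E_{j-1}) + d²` for `i < j - 1`
  have keyStep : ∀ i j : ℤ, i < j - 1 →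
      Module.finrank k (E i ⟶ E j)
        = Module.finrank k (E i ⟶ E (j - 1)) + d * d := by
    intro i j hij
    obtain ⟨f, g, w, hSE⟩ := hses j
    haveI hsub : Subsingleton (Abelian.Ext (E i) (E (j - 1)) 1) :=
      CY_ext_one_subsingleton φ hfd hfd1 (fun h => hdown i (j - 1) hij h)
    have hsurj : LinearMap.range (Linear.rightComp k (E i) g) = ⊤ := by
      rw [LinearMap.range_eq_top]
      intro u
      obtain ⟨v, hv⟩ := CY_exists_lift φ hφ₂ hfd hfd1 hSE u (Subsingleton.elim _ _)
      exact ⟨v, by simpa using hv⟩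
    have hcount : Module.finrank k (E i ⟶ E j)
        = Module.finrank k (E i ⟶ E (j - 1))
          + Module.finrank k (LinearMap.range
              (Linear.rightComp k (E i) g)) :=
      finrank_hom_of_shortExact hfd hSE (E i)
    rw [hsurj] at hcount
    rw [hcount, finrank_top, finrank_hom_biproduct hfd, hdim i]
  -- the recursion
  have main : ∀ i j : ℤ, i + 1 ≤ j →
      (Module.finrank k (E i ⟶ E j) : ℤ) = (j - i) * ((d : ℤ) * (d : ℤ)) := by
    intro i
    refine Int.le_induction ?_ ?_
    · have hb := keyBase (i + 1)
      rw [show i + 1 - 1 = i from by ring] at hb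
      rw [hb]
      push_cast
      ring
    · intro n hn ih
      have hstep := keyStep i (n + 1) (by omega)
      rw [show n + 1 - 1 = n from by ring] at hstep
      rw [hstep]
      push_cast
      rw [ih]
      ring
  intro i j hij
  have hm := main i j (by omega)
  rw [hm]
  ring
end
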